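/- Let G=(V,E) be a finite directed graph with initial vertex v_init ∈ V, and let M_G be the MDP constructed from (G, v_init) as in the Hamiltonian-path reduction. Then for every ε with 0 ≤ ε < 1/2^{|V|+1}: G has a Hamiltonian path starting at v_init (a path visiting every vertex exactly once) if and only if there exists a memoryless deterministic scheduler σ of M_G with |Pr^σ_{s₀}(◇{s_a}) − Pr^σ_{s₀}(◇{s_b})| ≤ ε. -/

import Mathlib

/-!
An MD scheduler of `M_G` is a choice of one enabled action per state; on the vertices it is a
partial successor map `f` (undefined where `τ` is played). The chain `s₀ s₁ … s_{|V|-1}` reaches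
`s_b` with probability exactly `2^{-|V|}`, whatever the scheduler. The state `s_a` is reached
only through the vertices: the walk enters `v_init` from `s₀` and follows `f`, each edge
surviving with probability `1/2`, so `s_a` has probability `2^{-k}` if the `f`-orbit of `v_init`
halts after visiting `k` vertices, and `0` if it never halts. A halting orbit visits no vertex
twice, so `k ≤ |V|`, and `2^{-k}` is within `ε < 2^{-(|V|+1)}` of `2^{-|V|}` exactly when
`k = |V|`, i.e. when the orbit is a Hamiltonian path.
-/

open scoped BigOperators Classical
open Filter

/-- A finite history: an initial state together with a list of (action, next-state) steps. -/
abbrev Hist (S A : Type*) : Type _ := S × List (A × S)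

/-- The last state of a history. -/
def Hist.last {S A : Type*} (π : Hist S A) : S :=
  (π.2.getLast?).elim π.1 Prod.snd

/-- A Markov decision process with finite state space `S` and finite action space `A`:
`P s a s'` is the transition probability, each state has at least one enabled action
(an action whose outgoing probabilities sum to `1`), and the outgoing probabilities
of a non-enabled action sum to `0`. -/
structure MDP (S A : Type*) [Fintype S] [Fintype A] where
  P : S → A → S → ℝ
  nonneg : ∀ s a s', 0 ≤ P s a s'
  le_one : ∀ s a s', P s a s' ≤ 1
  sum_cases : ∀ s a, (∑ s', P s a s') = 1 ∨ (∑ s', P s a s') = 0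
  exists_enabled : ∀ s, ∃ a, (∑ s', P s a s') = 1

namespace MDP

variable {S A : Type*} [Fintype S] [Fintype A]

/-- Action `a` is enabled in state `s`. -/
def enabled (M : MDP S A) (s : S) (a : A) : Prop := (∑ s', M.P s a s') = 1

/-- A state is absorbing if every enabled action loops on it with probability 1. -/
def Absorbing (M : MDP S A) (s : S) : Prop := ∀ a, M.enabled s a → M.P s a s = 1

end MDP

/-- A (history-dependent, randomized) scheduler for `M`: it assigns to every finite
history a probability distribution over the actions enabled at its last state. -/
structure Scheduler {S A : Type*} [Fintype S] [Fintype A] (M : MDP S A) where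
  choice : Hist S A → A → ℝ
  nonneg : ∀ π a, 0 ≤ choice π a
  sum_one : ∀ π, (∑ a, choice π a) = 1
  supp : ∀ π a, ¬ M.enabled (Hist.last π) a → choice π a = 0

namespace Scheduler

variable {S A : Type*} [Fintype S] [Fintype A] {M : MDP S A}

/-- A scheduler is memoryless if its choice only depends on the last state of the history. -/
def Memoryless (σ : Scheduler M) : Prop :=
  ∀ π π' : Hist S A, Hist.last π = Hist.last π' → σ.choice π = σ.choice π'

/-- A scheduler is deterministic if all its choice probabilities are 0 or 1. -/
def Deterministic (σ : Scheduler M) : Prop :=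
  ∀ π a, σ.choice π a = 0 ∨ σ.choice π a = 1

/-- Memoryless deterministic (MD) schedulers. -/
def MD (σ : Scheduler M) : Prop := σ.Memoryless ∧ σ.Deterministic

end Scheduler

/-- Probability of reaching the target set `T` within `n` steps, starting from history `π`,
under scheduler `σ`. -/
noncomputable def reachN {S A : Type*} [Fintype S] [Fintype A] (M : MDP S A)
    (σ : Scheduler M) (T : Set S) : ℕ → Hist S A → ℝ
  | 0, π => if Hist.last π ∈ T then 1 else 0
  | n + 1, π =>
      if Hist.last π ∈ T then 1
      else ∑ a, σ.choice π a * ∑ s', M.P (Hist.last π) a s' *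
        reachN M σ T n (π.1, π.2 ++ [(a, s')])

/-- `Pr M σ s T` is the probability of eventually reaching `T` from state `s` under
scheduler `σ`: the supremum of the step-bounded reachability probabilities. -/
noncomputable def Pr {S A : Type*} [Fintype S] [Fintype A] (M : MDP S A)
    (σ : Scheduler M) (s : S) (T : Set S) : ℝ :=
  ⨆ n : ℕ, reachN M σ T n (s, [])

/-- States of the Hamiltonian-path reduction MDP: the vertices `V`, the chain states
`s₀, s₁, …, s_{|V|−1}` (encoded as `Fin (card V)`), and the three extra states
`s_⊥, s_a, s_b` (encoded as `Fin 3`: `0 = s_⊥`, `1 = s_a`, `2 = s_b`). -/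
abbrev HSt (V : Type*) [Fintype V] : Type _ := V ⊕ (Fin (Fintype.card V) ⊕ Fin 3)

/-- Actions of the Hamiltonian-path reduction MDP: `none` is `τ` and `some (v, v')`
is the action associated with the edge `(v, v')`. -/
abbrev HAct (V : Type*) : Type _ := Option (V × V)

/-- The initial state `s₀` (the first chain state). -/
def hs0 (V : Type*) [Fintype V] [Nonempty V] : HSt V :=
  Sum.inr (Sum.inl ⟨0, Fintype.card_pos⟩)

/-- The absorbing state `s_⊥`. -/
def hsBot (V : Type*) [Fintype V] : HSt V := Sum.inr (Sum.inr 0)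

/-- The absorbing state `s_a`. -/
def hsA (V : Type*) [Fintype V] : HSt V := Sum.inr (Sum.inr 1)

/-- The absorbing state `s_b`. -/
def hsB (V : Type*) [Fintype V] : HSt V := Sum.inr (Sum.inr 2)

/-- The transition function of the Hamiltonian-path reduction MDP for a directed graph
`(V, E)` with initial vertex `vinit`:
`P(s₀,τ,vinit) = P(s₀,τ,s₁) = 1/2`; `P(sᵢ,τ,s_{i+1}) = P(sᵢ,τ,s_⊥) = 1/2` for
`1 ≤ i ≤ |V|−2`; `P(s_{|V|−1},τ,s_b) = P(s_{|V|−1},τ,s_⊥) = 1/2`; for `(v,v') ∈ E`,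
`P(v,(v,v'),v') = P(v,(v,v'),s_⊥) = 1/2`; `P(v,τ,s_a) = 1`; `s_⊥, s_a, s_b` absorbing. -/
noncomputable def hamP {V : Type*} [Fintype V] [DecidableEq V]
    (E : Set (V × V)) (vinit : V) : HSt V → HAct V → HSt V → ℝ := fun x act y =>
  match x, act with
  | Sum.inl v, none => if y = hsA V then 1 else 0
  | Sum.inl v, some (u, u') =>
      if u = v ∧ (u, u') ∈ E then
        (if y = Sum.inl u' then (1 : ℝ) / 2 else 0) +
          (if y = hsBot V then (1 : ℝ) / 2 else 0)
      else 0
  | Sum.inr (Sum.inl i), none =>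
      (if y = (if (i : ℕ) = 0 then Sum.inl vinit else hsBot V) then (1 : ℝ) / 2 else 0) +
        (if h : (i : ℕ) + 1 < Fintype.card V then
            (if y = Sum.inr (Sum.inl ⟨(i : ℕ) + 1, h⟩) then (1 : ℝ) / 2 else 0)
          else (if y = hsB V then (1 : ℝ) / 2 else 0))
  | Sum.inr (Sum.inl _), some _ => 0
  | Sum.inr (Sum.inr e), none => if y = Sum.inr (Sum.inr e) then 1 else 0
  | Sum.inr (Sum.inr _), some _ => 0

/-- `l` is a Hamiltonian path of the graph `(V, E)` starting at `vinit`: it lists every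
vertex exactly once, starts at `vinit`, and follows edges of `E`. -/
def IsHamPath {V : Type*} [Fintype V] (E : Set (V × V)) (vinit : V) (l : List V) : Prop :=
  l.Nodup ∧ l.length = Fintype.card V ∧ l.head? = some vinit ∧
    l.Chain' (fun u u' => (u, u') ∈ E)

section HaltingOrbit

variable {α : Type*}

/-- `IsHaltingOrbit f a l`: iterating the partial map `f` from `a` visits exactly the
entries of `l`, in order, and then `f` is undefined. -/
inductive IsHaltingOrbit (f : α → Option α) : α → List α → Prop
  | halt {a : α} : f a = none → IsHaltingOrbit f a [a]
  | step {a b : α} {l : List α} :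
      f a = some b → IsHaltingOrbit f b l → IsHaltingOrbit f a (a :: l)

namespace IsHaltingOrbit

variable {f : α → Option α} {a b : α} {l l' : List α}

theorem head?_eq (h : IsHaltingOrbit f a l) : l.head? = some a := by
  cases h <;> rfl

theorem length_pos (h : IsHaltingOrbit f a l) : 0 < l.length := by
  cases h <;> simp

theorem isChain (h : IsHaltingOrbit f a l) : l.IsChain (fun x y => f x = some y) := by
  induction h with
  | halt => exact .singleton _
  | step hab hb ih => cases hb <;> exact .cons_cons hab ih

theorem unique (h : IsHaltingOrbit f a l) (h' : IsHaltingOrbit f a l') : l = l' := by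
  induction h generalizing l' with
  | halt ha =>
    cases h' with
    | halt => rfl
    | step hab => simp [ha] at hab
  | step hab _ ih =>
    cases h' with
    | halt ha => simp [ha] at hab
    | step hab' hb' =>
      cases hab.symm.trans hab'
      rw [ih hb']

theorem exists_of_mem (h : IsHaltingOrbit f a l) (hb : b ∈ l) :
    ∃ l', IsHaltingOrbit f b l' ∧ l'.length ≤ l.length := by
  induction h with
  | halt ha =>
    rw [List.mem_singleton.1 hb]
    exact ⟨_, .halt ha, le_rfl⟩
  | step hac hc ih =>
    rcases List.mem_cons.1 hb with rfl | hb
    · exact ⟨_, .step hac hc, le_rfl⟩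
    · obtain ⟨l', hl', hlen⟩ := ih hb
      exact ⟨l', hl', by simp; omega⟩

/-- A halting orbit cannot revisit a point: from the repeated point the orbit would have to
be both the whole remaining orbit and a strictly shorter part of it. -/
theorem nodup (h : IsHaltingOrbit f a l) : l.Nodup := by
  induction h with
  | halt => exact List.nodup_singleton _
  | step hab hb ih =>
    refine List.nodup_cons.2 ⟨fun ha => ?_, ih⟩
    obtain ⟨l', hl', hlen⟩ := hb.exists_of_mem ha
    cases hl'.unique (.step hab hb)
    simp at hlen

end IsHaltingOrbit

variable [DecidableEq α]

theorem isHaltingOrbit_of_eq_lookup {g : α → Option α} {a : α} {l : List α}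
    (hl : (a :: l).Nodup) (hg : ∀ v ∈ a :: l, g v = ((a :: l).zip l).lookup v) :
    IsHaltingOrbit g a (a :: l) := by
  induction l generalizing a with
  | nil => exact .halt (by simpa using hg a (by simp))
  | cons b t ih =>
    obtain ⟨hab, hbt⟩ := List.nodup_cons.1 hl
    refine .step (by simpa [List.lookup] using hg a (by simp)) (ih hbt fun v hv => ?_)
    have hva : v ≠ a := fun h => hab (h ▸ hv)
    simpa [List.lookup_cons, beq_false_of_ne hva] using hg v (List.mem_cons_of_mem a hv)

theorem isHaltingOrbit_lookup_zip_tail {a : α} {l : List α} (hl : l.Nodup)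
    (ha : l.head? = some a) : IsHaltingOrbit (fun v => (l.zip l.tail).lookup v) a l := by
  obtain ⟨t, rfl⟩ := List.head?_eq_some_iff.1 ha
  exact isHaltingOrbit_of_eq_lookup hl fun _ _ => rfl

theorem rel_of_lookup_zip_tail_eq_some {R : α → α → Prop} :
    ∀ {l : List α} {v w : α}, l.IsChain R → (l.zip l.tail).lookup v = some w → R v w
  | [], _, _, _, h => by simp at h
  | [_], _, _, _, h => by simp at h
  | a :: b :: t, v, w, hl, h => by
    rw [List.isChain_cons_cons] at hl
    by_cases hva : v = a
    · subst hva
      simp only [List.tail_cons, List.zip_cons_cons, List.lookup_cons_self,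
        Option.some.injEq] at h
      exact h ▸ hl.1
    · refine rel_of_lookup_zip_tail_eq_some hl.2 ?_
      simpa [List.lookup_cons, beq_false_of_ne hva] using h

end HaltingOrbit

theorem ciSup_ite_le_eq (N : ℕ) {c : ℝ} (hc : 0 ≤ c) :
    ⨆ n : ℕ, (if N ≤ n then c else 0) = c := by
  have hle : ∀ n : ℕ, (if N ≤ n then c else 0) ≤ c := fun n => by split_ifs <;> simp [hc]
  exact le_antisymm (ciSup_le hle)
    (le_ciSup_of_le ⟨c, Set.forall_mem_range.2 hle⟩ N (by simp))

section MarkovChain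

variable {S : Type*} [Fintype S]

noncomputable def chainReach (P : S → S → ℝ) (T : Set S) : ℕ → S → ℝ
  | 0, s => if s ∈ T then 1 else 0
  | n + 1, s => if s ∈ T then 1 else ∑ s', P s s' * chainReach P T n s'

variable {P : S → S → ℝ} {T : Set S}

theorem chainReach_of_mem {s : S} (hs : s ∈ T) (n : ℕ) : chainReach P T n s = 1 := by
  cases n <;> simp [chainReach, hs]

end MarkovChain

section Schedulers

theorem Hist.last_snoc {S A : Type*} (π : Hist S A) (a : A) (s : S) :
    Hist.last ((π.1, π.2 ++ [(a, s)]) : Hist S A) = s := by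
  simp [Hist.last]

variable {S A : Type*} [Fintype S] [Fintype A] [DecidableEq A]

noncomputable def Scheduler.ofAction (M : MDP S A) (act : S → A)
    (h : ∀ s, M.enabled s (act s)) : Scheduler M where
  choice π a := if a = act (Hist.last π) then 1 else 0
  nonneg π a := by split_ifs <;> norm_num
  sum_one π := by simp
  supp π a ha := if_neg fun h' : a = act (Hist.last π) => ha (h' ▸ h _)

variable {M : MDP S A}

theorem Scheduler.ofAction_MD {act : S → A} {h : ∀ s, M.enabled s (act s)} :
    (Scheduler.ofAction M act h).MD :=
  ⟨fun π π' hπ => by simp only [Scheduler.ofAction, hπ],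
    fun π a => by simp only [Scheduler.ofAction]; split_ifs <;> simp⟩

theorem Scheduler.MD.exists_action {σ : Scheduler M} (hσ : σ.MD) :
    ∃ act : S → A, (∀ s, M.enabled s (act s)) ∧
      ∀ π a, σ.choice π a = if a = act (Hist.last π) then 1 else 0 := by
  have hex : ∀ s, ∃ a, σ.choice (s, []) a = 1 := by
    intro s
    by_contra! h
    have hsum := σ.sum_one (s, [])
    rw [Finset.sum_eq_zero fun a _ => (hσ.2 _ a).resolve_right (h a)] at hsum
    norm_num at hsum
  choose act hact using hex
  have hchoice : ∀ s a, σ.choice (s, []) a = if a = act s then 1 else 0 := by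
    intro s a
    split_ifs with ha
    · rw [ha, hact]
    · have hsum := σ.sum_one (s, [])
      rw [← Finset.add_sum_erase _ _ (Finset.mem_univ (act s)), hact, add_eq_left] at hsum
      exact (Finset.sum_eq_zero_iff_of_nonneg fun b _ => σ.nonneg _ b).1 hsum a
        (Finset.mem_erase.2 ⟨ha, Finset.mem_univ a⟩)
  refine ⟨act, fun s => ?_, fun π a => ?_⟩
  · by_contra h
    have h0 := σ.supp (s, []) (act s) h
    rw [hact] at h0
    norm_num at h0
  · rw [hσ.1 π (Hist.last π, []) rfl, hchoice]

variable {σ : Scheduler M} {act : S → A}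

theorem reachN_eq_chainReach
    (hσ : ∀ π a, σ.choice π a = if a = act (Hist.last π) then 1 else 0) (T : Set S) (n : ℕ)
    (π : Hist S A) :
    reachN M σ T n π = chainReach (fun s => M.P s (act s)) T n (Hist.last π) := by
  induction n generalizing π with
  | zero => rfl
  | succ n ih =>
    simp only [reachN, chainReach, hσ, ih, Hist.last_snoc, ite_mul, one_mul, zero_mul,
      Finset.sum_ite_eq', Finset.mem_univ, if_true]

theorem Pr_eq_iSup_chainReach
    (hσ : ∀ π a, σ.choice π a = if a = act (Hist.last π) then 1 else 0) (s : S) (T : Set S) :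
    Pr M σ s T = ⨆ n, chainReach (fun s => M.P s (act s)) T n s := by
  simp only [Pr, reachN_eq_chainReach hσ]
  rfl

end Schedulers

section Reduction

variable {V : Type*} [Fintype V]

def hamSucc (act : HSt V → HAct V) (v : V) : Option V :=
  (act (Sum.inl v)).map Prod.snd

def hamAction (f : V → Option V) : HSt V → HAct V
  | Sum.inl v => (f v).map (v, ·)
  | Sum.inr _ => none

theorem hamSucc_hamAction (f : V → Option V) : hamSucc (hamAction f) = f := by
  funext v
  simp [hamSucc, hamAction, Option.map_map, Function.comp_def]

variable [DecidableEq V] {E : Set (V × V)} {vinit : V}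

theorem sum_hamP_inr_none (z : Fin (Fintype.card V) ⊕ Fin 3) :
    ∑ y, hamP E vinit (Sum.inr z) none y = 1 := by
  rcases z with i | e
  · by_cases h : (i : ℕ) + 1 < Fintype.card V <;>
      simp [hamP, h, Finset.sum_add_distrib] <;> norm_num
  · simp [hamP]

theorem sum_hamP_inl_none (v : V) : ∑ y, hamP E vinit (Sum.inl v) none y = 1 := by
  simp [hamP]

theorem sum_hamP_inl_some (v u w : V) :
    ∑ y, hamP E vinit (Sum.inl v) (some (u, w)) y = if u = v ∧ (u, w) ∈ E then 1 else 0 := by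
  by_cases h : u = v ∧ (u, w) ∈ E
  · simp only [hamP, if_pos h, Finset.sum_add_distrib]
    norm_num
  · simp [hamP, h]

variable (E vinit) in
def HamEnabled (act : HSt V → HAct V) : Prop :=
  ∀ s, ∑ y, hamP E vinit s (act s) y = 1

variable {act : HSt V → HAct V}

theorem hamEnabled_iff {M : MDP (HSt V) (HAct V)} (hM : M.P = hamP E vinit) :
    HamEnabled E vinit act ↔ ∀ s, M.enabled s (act s) := by
  simp only [HamEnabled, MDP.enabled, hM]

theorem HamEnabled.inr_eq_none (hact : HamEnabled E vinit act)
    (z : Fin (Fintype.card V) ⊕ Fin 3) : act (Sum.inr z) = none := by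
  have h := hact (Sum.inr z)
  cases hz : act (Sum.inr z) with
  | none => rfl
  | some e => rcases z with _ | _ <;> simp [hz, hamP] at h

theorem HamEnabled.eq_some_of_hamSucc_eq_some (hact : HamEnabled E vinit act) {v w : V}
    (h : hamSucc act v = some w) : act (Sum.inl v) = some (v, w) ∧ (v, w) ∈ E := by
  obtain ⟨⟨u, w'⟩, hvu, rfl⟩ := Option.map_eq_some_iff.1 h
  have hsum := hact (Sum.inl v)
  rw [hvu, sum_hamP_inl_some] at hsum
  obtain ⟨rfl, hE⟩ : u = v ∧ (u, w') ∈ E := by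
    by_contra hne
    simp [hne] at hsum
  exact ⟨hvu, hE⟩

theorem hamEnabled_hamAction {f : V → Option V} (hf : ∀ v w, f v = some w → (v, w) ∈ E) :
    HamEnabled E vinit (hamAction f) := by
  intro s
  rcases s with v | z
  · cases hv : f v with
    | none => simpa [hamAction, hv] using sum_hamP_inl_none v
    | some w =>
      simp only [hamAction, hv, Option.map_some]
      rw [sum_hamP_inl_some, if_pos ⟨rfl, hf v w hv⟩]
  · exact sum_hamP_inr_none z

variable (E vinit act) in
noncomputable def hamChain : HSt V → HSt V → ℝ := fun s => hamP E vinit s (act s)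

theorem Pr_eq_iSup_hamChain {M : MDP (HSt V) (HAct V)} (hM : M.P = hamP E vinit)
    {σ : Scheduler M} (hσ : ∀ π a, σ.choice π a = if a = act (Hist.last π) then 1 else 0)
    (s : HSt V) (T : Set (HSt V)) :
    Pr M σ s T = ⨆ n, chainReach (hamChain E vinit act) T n s := by
  rw [Pr_eq_iSup_chainReach hσ, hM]
  rfl

variable {T : Set (HSt V)}

theorem chainReach_hamChain_inr_inl (hact : HamEnabled E vinit act) {i : Fin (Fintype.card V)}
    (hi : Sum.inr (Sum.inl i) ∉ T) (n : ℕ) :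
    chainReach (hamChain E vinit act) T (n + 1) (Sum.inr (Sum.inl i)) =
      1 / 2 * chainReach (hamChain E vinit act) T n
          (if (i : ℕ) = 0 then Sum.inl vinit else hsBot V) +
        1 / 2 * chainReach (hamChain E vinit act) T n
          (if h : (i : ℕ) + 1 < Fintype.card V then Sum.inr (Sum.inl ⟨i + 1, h⟩)
            else hsB V) := by
  rw [chainReach, if_neg hi]
  simp only [hamChain, hact.inr_eq_none, hamP]
  split_ifs <;> simp [add_mul, ite_mul, Finset.sum_add_distrib]

theorem chainReach_hamChain_absorbing (hact : HamEnabled E vinit act) {e : Fin 3}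
    (he : Sum.inr (Sum.inr e) ∉ T) (n : ℕ) :
    chainReach (hamChain E vinit act) T n (Sum.inr (Sum.inr e)) = 0 := by
  induction n with
  | zero => simp [chainReach, he]
  | succ n ih =>
    rw [chainReach, if_neg he]
    simp [hamChain, hact.inr_eq_none, hamP, ih]

theorem chainReach_hamChain_inl_of_hamSucc_eq_none {v : V} (h : hamSucc act v = none)
    (hv : Sum.inl v ∉ T) (n : ℕ) :
    chainReach (hamChain E vinit act) T (n + 1) (Sum.inl v) =
      chainReach (hamChain E vinit act) T n (hsA V) := by
  rw [chainReach, if_neg hv]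
  simp [hamChain, Option.map_eq_none_iff.1 h, hamP]

theorem chainReach_hamChain_inl_of_hamSucc_eq_some (hact : HamEnabled E vinit act) {v w : V}
    (h : hamSucc act v = some w) (hv : Sum.inl v ∉ T) (n : ℕ) :
    chainReach (hamChain E vinit act) T (n + 1) (Sum.inl v) =
      1 / 2 * chainReach (hamChain E vinit act) T n (Sum.inl w) +
        1 / 2 * chainReach (hamChain E vinit act) T n (hsBot V) := by
  obtain ⟨hvw, hE⟩ := hact.eq_some_of_hamSucc_eq_some h
  rw [chainReach, if_neg hv]
  simp [hamChain, hvw, hamP, hE, add_mul, ite_mul, Finset.sum_add_distrib]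

end Reduction

section Targets

variable {V : Type*} [Fintype V] [DecidableEq V] {E : Set (V × V)} {vinit : V}
  {act : HSt V → HAct V}

theorem chainReach_hsB_inl (hact : HamEnabled E vinit act) (n : ℕ) (v : V) :
    chainReach (hamChain E vinit act) {hsB V} n (Sum.inl v) = 0 := by
  induction n generalizing v with
  | zero => simp [chainReach, hsB]
  | succ n ih =>
    cases hv : hamSucc act v with
    | none =>
      rw [chainReach_hamChain_inl_of_hamSucc_eq_none hv (by simp [hsB])]
      exact chainReach_hamChain_absorbing hact (by simp [hsB]) n
    | some w =>
      have hbot : chainReach (hamChain E vinit act) {hsB V} n (hsBot V) = 0 :=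
        chainReach_hamChain_absorbing hact (by simp [hsB]) n
      rw [chainReach_hamChain_inl_of_hamSucc_eq_some hact hv (by simp [hsB]), ih, hbot]
      ring

theorem chainReach_hsB_inr_inl (hact : HamEnabled E vinit act) (n : ℕ)
    (i : Fin (Fintype.card V)) :
    chainReach (hamChain E vinit act) {hsB V} n (Sum.inr (Sum.inl i)) =
      if Fintype.card V - i ≤ n then (1 / 2) ^ (Fintype.card V - i) else 0 := by
  induction n generalizing i with
  | zero =>
    have := i.isLt
    rw [chainReach, if_neg (by simp [hsB]), if_neg (by omega)]
  | succ n ih =>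
    have hback : chainReach (hamChain E vinit act) {hsB V} n
        (if (i : ℕ) = 0 then Sum.inl vinit else hsBot V) = 0 := by
      split_ifs
      · exact chainReach_hsB_inl hact n vinit
      · exact chainReach_hamChain_absorbing hact (by simp [hsB]) n
    rw [chainReach_hamChain_inr_inl hact (by simp [hsB]), hback]
    by_cases hi : (i : ℕ) + 1 < Fintype.card V
    · obtain ⟨k, hk⟩ : ∃ k, Fintype.card V - i = k + 1 :=
        ⟨Fintype.card V - (i + 1), by omega⟩
      rw [dif_pos hi, ih, hk, show Fintype.card V - (i + 1) = k by omega]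
      split_ifs <;> first | omega | ring
    · rw [dif_neg hi, chainReach_of_mem (Set.mem_singleton _), if_pos (by omega),
        show Fintype.card V - i = 1 by omega]
      ring

theorem chainReach_hsA_inr_inl_of_ne_zero (hact : HamEnabled E vinit act) (n : ℕ)
    (i : Fin (Fintype.card V)) (hi : (i : ℕ) ≠ 0) :
    chainReach (hamChain E vinit act) {hsA V} n (Sum.inr (Sum.inl i)) = 0 := by
  induction n generalizing i with
  | zero => simp [chainReach, hsA]
  | succ n ih =>
    have hbot : chainReach (hamChain E vinit act) {hsA V} n (hsBot V) = 0 :=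
      chainReach_hamChain_absorbing hact (by simp [hsA]) n
    have hnext : chainReach (hamChain E vinit act) {hsA V} n
        (if h : (i : ℕ) + 1 < Fintype.card V then Sum.inr (Sum.inl ⟨i + 1, h⟩)
          else hsB V) = 0 := by
      split_ifs
      · exact ih _ (by simp)
      · exact chainReach_hamChain_absorbing hact (by simp [hsA]) n
    rw [chainReach_hamChain_inr_inl hact (by simp [hsA]), if_neg hi, hbot, hnext]
    ring

theorem chainReach_hsA_of_isHaltingOrbit (hact : HamEnabled E vinit act) {v : V} {l : List V}
    (h : IsHaltingOrbit (hamSucc act) v l) (n : ℕ) :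
    chainReach (hamChain E vinit act) {hsA V} n (Sum.inl v) =
      if l.length ≤ n then (1 / 2) ^ (l.length - 1) else 0 := by
  induction h generalizing n with
  | halt hv =>
    cases n with
    | zero => simp [chainReach, hsA]
    | succ n =>
      rw [chainReach_hamChain_inl_of_hamSucc_eq_none hv (by simp [hsA]),
        chainReach_of_mem (Set.mem_singleton _)]
      simp
  | step hvw hw ih =>
    cases n with
    | zero => simp [chainReach, hsA]
    | succ n =>
      have hbot : chainReach (hamChain E vinit act) {hsA V} n (hsBot V) = 0 :=
        chainReach_hamChain_absorbing hact (by simp [hsA]) n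
      rw [chainReach_hamChain_inl_of_hamSucc_eq_some hact hvw (by simp [hsA]), ih, hbot]
      obtain ⟨k, hk⟩ := Nat.exists_eq_add_of_lt hw.length_pos
      simp only [List.length_cons, hk, Nat.add_sub_cancel, add_le_add_iff_right]
      split_ifs <;> ring

theorem chainReach_hsA_eq_zero_of_forall_not_isHaltingOrbit (hact : HamEnabled E vinit act)
    {v : V} (h : ∀ l, ¬ IsHaltingOrbit (hamSucc act) v l) (n : ℕ) :
    chainReach (hamChain E vinit act) {hsA V} n (Sum.inl v) = 0 := by
  induction n generalizing v with
  | zero => simp [chainReach, hsA]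
  | succ n ih =>
    cases hw : hamSucc act v with
    | none => exact absurd (.halt hw) (h [v])
    | some w =>
      have hbot : chainReach (hamChain E vinit act) {hsA V} n (hsBot V) = 0 :=
        chainReach_hamChain_absorbing hact (by simp [hsA]) n
      rw [chainReach_hamChain_inl_of_hamSucc_eq_some hact hw (by simp [hsA]),
        ih fun l hl => h (v :: l) (.step hw hl), hbot]
      ring

variable [Nonempty V]

theorem iSup_chainReach_hsB (hact : HamEnabled E vinit act) :
    ⨆ n, chainReach (hamChain E vinit act) {hsB V} n (hs0 V) = (1 / 2) ^ Fintype.card V := by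
  have h (n : ℕ) := chainReach_hsB_inr_inl hact n ⟨0, Fintype.card_pos⟩
  simp only [Nat.sub_zero] at h
  simp only [hs0, h]
  exact ciSup_ite_le_eq _ (by positivity)

theorem chainReach_hsA_hs0_succ (hact : HamEnabled E vinit act) (n : ℕ) :
    chainReach (hamChain E vinit act) {hsA V} (n + 1) (hs0 V) =
      1 / 2 * chainReach (hamChain E vinit act) {hsA V} n (Sum.inl vinit) := by
  have hnext : chainReach (hamChain E vinit act) {hsA V} n
      (if h : 0 + 1 < Fintype.card V then Sum.inr (Sum.inl ⟨0 + 1, h⟩) else hsB V) = 0 := by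
    split_ifs
    · exact chainReach_hsA_inr_inl_of_ne_zero hact n _ one_ne_zero
    · exact chainReach_hamChain_absorbing hact (by simp [hsA]) n
  rw [hs0, chainReach_hamChain_inr_inl hact (by simp [hsA]), if_pos rfl, hnext]
  ring

theorem iSup_chainReach_hsA_of_isHaltingOrbit (hact : HamEnabled E vinit act) {l : List V}
    (h : IsHaltingOrbit (hamSucc act) vinit l) :
    ⨆ n, chainReach (hamChain E vinit act) {hsA V} n (hs0 V) = (1 / 2) ^ l.length := by
  have hval (n : ℕ) : chainReach (hamChain E vinit act) {hsA V} n (hs0 V) =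
      if l.length + 1 ≤ n then (1 / 2) ^ l.length else 0 := by
    cases n with
    | zero => simp [chainReach, hs0, hsA]
    | succ n =>
      obtain ⟨k, hk⟩ := Nat.exists_eq_add_of_lt h.length_pos
      rw [chainReach_hsA_hs0_succ hact, chainReach_hsA_of_isHaltingOrbit hact h, hk]
      simp only [Nat.add_sub_cancel, add_le_add_iff_right]
      split_ifs <;> ring
  simp only [hval]
  exact ciSup_ite_le_eq _ (by positivity)

theorem iSup_chainReach_hsA_of_forall_not_isHaltingOrbit (hact : HamEnabled E vinit act)
    (h : ∀ l, ¬ IsHaltingOrbit (hamSucc act) vinit l) :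
    ⨆ n, chainReach (hamChain E vinit act) {hsA V} n (hs0 V) = 0 := by
  have hval (n : ℕ) : chainReach (hamChain E vinit act) {hsA V} n (hs0 V) = 0 := by
    cases n with
    | zero => simp [chainReach, hs0, hsA]
    | succ n =>
      rw [chainReach_hsA_hs0_succ hact,
        chainReach_hsA_eq_zero_of_forall_not_isHaltingOrbit hact h n, mul_zero]
  simp only [hval, ciSup_const]

end Targets

section HamiltonianPaths

variable {V : Type*} [Fintype V] [DecidableEq V] {E : Set (V × V)} {vinit : V} {l : List V}

theorem IsHamPath.exists_hamEnabled_isHaltingOrbit (hl : IsHamPath E vinit l) :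
    ∃ act, HamEnabled E vinit act ∧ IsHaltingOrbit (hamSucc act) vinit l := by
  obtain ⟨hnd, -, hhead, hchain⟩ := hl
  refine ⟨hamAction fun v => (l.zip l.tail).lookup v,
    hamEnabled_hamAction fun _ _ => rel_of_lookup_zip_tail_eq_some hchain, ?_⟩
  rw [hamSucc_hamAction]
  exact isHaltingOrbit_lookup_zip_tail hnd hhead

theorem isHamPath_of_isHaltingOrbit {act : HSt V → HAct V} (hact : HamEnabled E vinit act)
    (hl : IsHaltingOrbit (hamSucc act) vinit l) (hlen : l.length = Fintype.card V) :
    IsHamPath E vinit l :=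
  ⟨hl.nodup, hlen, hl.head?_eq,
    hl.isChain.imp fun _ _ h => (hact.eq_some_of_hamSucc_eq_some h).2⟩

end HamiltonianPaths

theorem eq_of_abs_half_pow_sub_half_pow_lt {m n : ℕ} (hmn : m ≤ n)
    (h : |(1 / 2 : ℝ) ^ m - (1 / 2) ^ n| < (1 / 2) ^ (n + 1)) : m = n := by
  by_contra hne
  obtain ⟨k, rfl⟩ := Nat.exists_eq_add_of_lt (lt_of_le_of_ne hmn hne)
  have hk : (1 / 2 : ℝ) ^ k ≤ 1 := pow_le_one₀ (by norm_num) (by norm_num)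
  have hm : 0 < (1 / 2 : ℝ) ^ m := by positivity
  have h' := (le_abs_self _).trans_lt h
  simp only [pow_add, pow_one] at h'
  nlinarith [mul_le_mul_of_nonneg_left hk hm.le]

/-- For every `0 ≤ ε < 1/2^{|V|+1}`: `G` has a Hamiltonian path starting
at `vinit` iff some memoryless deterministic scheduler `σ` of the reduction MDP satisfies
`|Pr^σ_{s₀}(◇{s_a}) − Pr^σ_{s₀}(◇{s_b})| ≤ ε`. -/
theorem hamiltonian_iff_MD_approx_equal
    {V : Type*} [Fintype V] [DecidableEq V] [Nonempty V]
    (E : Set (V × V)) (vinit : V)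
    (M : MDP (HSt V) (HAct V)) (hM : M.P = hamP E vinit)
    (ε : ℝ) (hε0 : 0 ≤ ε) (hε : ε < 1 / 2 ^ (Fintype.card V + 1)) :
    (∃ l : List V, IsHamPath E vinit l) ↔
      ∃ σ : Scheduler M, σ.MD ∧
        |Pr M σ (hs0 V) ({hsA V} : Set (HSt V)) -
          Pr M σ (hs0 V) ({hsB V} : Set (HSt V))| ≤ ε := by
  rw [← one_div_pow] at hε
  constructor
  · rintro ⟨l, hl⟩
    obtain ⟨act, hact, horbit⟩ := hl.exists_hamEnabled_isHaltingOrbit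
    refine ⟨.ofAction M act ((hamEnabled_iff hM).1 hact), Scheduler.ofAction_MD, ?_⟩
    rw [Pr_eq_iSup_hamChain hM (fun _ _ => rfl), Pr_eq_iSup_hamChain hM (fun _ _ => rfl),
      iSup_chainReach_hsA_of_isHaltingOrbit hact horbit, iSup_chainReach_hsB hact, hl.2.1,
      sub_self, abs_zero]
    exact hε0
  · rintro ⟨σ, hσ, hclose⟩
    obtain ⟨act, hen, hchoice⟩ := hσ.exists_action
    have hact : HamEnabled E vinit act := (hamEnabled_iff hM).2 hen
    rw [Pr_eq_iSup_hamChain hM hchoice, Pr_eq_iSup_hamChain hM hchoice,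
      iSup_chainReach_hsB hact] at hclose
    by_cases horbit : ∃ l, IsHaltingOrbit (hamSucc act) vinit l
    · obtain ⟨l, hl⟩ := horbit
      rw [iSup_chainReach_hsA_of_isHaltingOrbit hact hl] at hclose
      exact ⟨l, isHamPath_of_isHaltingOrbit hact hl
        (eq_of_abs_half_pow_sub_half_pow_lt hl.nodup.length_le_card (hclose.trans_lt hε))⟩
    · rw [iSup_chainReach_hsA_of_forall_not_isHaltingOrbit hact (not_exists.1 horbit), zero_sub,
        abs_neg, abs_of_pos (by positivity)] at hclose
      have hgap := hclose.trans_lt hε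
      rw [pow_succ] at hgap
      linarith [pow_pos (one_half_pos (α := ℝ)) (Fintype.card V)]
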